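/- In the reduction from two-counter machines to session type equality: if machine M starting from configuration (1, i, j) does not halt, then T₁[i,j] ≡ T₁'[i,j], i.e., the relation consisting of all pairs (T_p[c₁,c₂], T_p'[c₁,c₂]) for reachable configurations (p, c₁, c₂) (together with the continuation pairs required to traverse assertion constructors) is a type bisimulation. -/

import Mathlib

/-- Instructions of a two-counter (Minsky) machine. Instruction indices are 1-based. -/
inductive Instr : Type where
  | inc1 (k : ℕ)        -- increment counter 1; goto k
  | inc2 (k : ℕ)        -- increment counter 2; goto k
  | zdec1 (k l : ℕ)     -- if c₁ = 0 goto k else dec c₁; goto l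
  | zdec2 (k l : ℕ)     -- if c₂ = 0 goto k else dec c₂; goto l
  | halt
deriving DecidableEq

/-- A configuration (i, c₁, c₂): instruction pointer and counter values. -/
abbrev Config := ℕ × ℕ × ℕ

/-- The successor relation C ↦ C' of a two-counter machine M = ι₁,…,ι_m. -/
def Succ (M : List Instr) (C C' : Config) : Prop :=
  match M[C.1 - 1]? with
  | some (.inc1 k) => C' = (k, C.2.1 + 1, C.2.2)
  | some (.inc2 k) => C' = (k, C.2.1, C.2.2 + 1)
  | some (.zdec1 k l) =>
      if C.2.1 = 0 then C' = (k, C.2.1, C.2.2) else C' = (l, C.2.1 - 1, C.2.2)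
  | some (.zdec2 k l) =>
      if C.2.2 = 0 then C' = (k, C.2.1, C.2.2) else C' = (l, C.2.1, C.2.2 - 1)
  | some .halt => False
  | none => False

/-- Closed arithmetically refined session types: internal/external choice over
finite label sets (labels are naturals), tensor, lolli, unit, assertions ?{φ}A,
assumptions !{φ}A, existential and universal quantification over naturals
(represented as families of types), and indexed type variables V[ē] with a
list of (closed) natural-number indices. -/
inductive RTy : Type 1 where
  | ichoice (L : Finset ℕ) (f : ℕ → RTy)
  | echoice (L : Finset ℕ) (f : ℕ → RTy)
  | tensor (A B : RTy)
  | lolli (A B : RTy)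
  | one
  | assrt (φ : Prop) (A : RTy)   -- ?{φ}. A
  | assum (φ : Prop) (A : RTy)   -- !{φ}. A
  | exi (f : ℕ → RTy)            -- ∃n. A
  | all (f : ℕ → RTy)            -- ∀n. A
  | var (v : ℕ) (es : List ℕ)    -- V[ē]

/-- A signature assigns to each indexed type variable and each list of indices
the (instantiated) defining type. -/
abbrev Sig := ℕ → List ℕ → RTy

/-- One-step unfolding of indexed type definitions. -/
def unfoldT (Sg : Sig) : RTy → RTy
  | .var v es => Sg v es
  | A => A

/-- One step of the bisimulation game on closed refined session types. -/
def RStep (R : RTy → RTy → Prop) : RTy → RTy → Prop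
  | .ichoice L f, .ichoice L' g => L = L' ∧ ∀ ℓ ∈ L, R (f ℓ) (g ℓ)
  | .echoice L f, .echoice L' g => L = L' ∧ ∀ ℓ ∈ L, R (f ℓ) (g ℓ)
  | .tensor A₁ A₂, .tensor B₁ B₂ => R A₁ B₁ ∧ R A₂ B₂
  | .lolli A₁ A₂, .lolli B₁ B₂ => R A₁ B₁ ∧ R A₂ B₂
  | .one, .one => True
  | .assrt φ A, .assrt ψ B => (φ ∧ ψ ∧ R A B) ∨ (¬φ ∧ ¬ψ)
  | .assum φ A, .assum ψ B => (φ ∧ ψ ∧ R A B) ∨ (¬φ ∧ ¬ψ)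
  | .exi f, .exi g => ∀ i : ℕ, R (f i) (g i)
  | .all f, .all g => ∀ i : ℕ, R (f i) (g i)
  | _, _ => False

/-- `R` is a type bisimulation on closed refined session types. -/
def IsBisim (Sg : Sig) (R : RTy → RTy → Prop) : Prop :=
  ∀ A B, R A B → RStep R (unfoldT Sg A) (unfoldT Sg B)

/-- Type equality A ≡ B: some type bisimulation relates A and B. -/
def REq (Sg : Sig) (A B : RTy) : Prop :=
  ∃ R, IsBisim Sg R ∧ R A B

/-! The reduction from two-counter machines to type equality.  For a machine
M = ι₁,…,ι_m we define a signature in which type variable `2*p` is T_p[c₁,c₂]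
and `2*p+1` is T_p'[c₁,c₂] (indices `es = [c₁,c₂]`).  Labels: ℓ = 0, ℓ' = 1,
inc₁ = 2, inc₂ = 3, zero₁ = 4, dec₁ = 5, zero₂ = 6, dec₂ = 7.  At a halt
instruction (or an out-of-range instruction pointer, where the computation
also ends) the unprimed type loops as T_inf = ⊕{ℓ : T_inf} and the primed
type as T_inf' = ⊕{ℓ' : T_inf'} with ℓ ≠ ℓ'; all other instructions are
translated identically on both sides using only internal choice and
assertions ?{c = 0}, ?{c > 0}. -/
def SgM (M : List Instr) : Sig := fun v es =>
  let c₁ := es.getD 0 0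
  let c₂ := es.getD 1 0
  match M[v / 2 - 1]? with
  | some (.inc1 k) => .ichoice {2} (fun _ => .var (2 * k + v % 2) [c₁ + 1, c₂])
  | some (.inc2 k) => .ichoice {3} (fun _ => .var (2 * k + v % 2) [c₁, c₂ + 1])
  | some (.zdec1 k l) => .ichoice {4, 5} (fun ℓ =>
      if ℓ = 4 then .assrt (c₁ = 0) (.var (2 * k + v % 2) [c₁, c₂])
      else .assrt (c₁ > 0) (.var (2 * l + v % 2) [c₁ - 1, c₂]))
  | some (.zdec2 k l) => .ichoice {6, 7} (fun ℓ =>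
      if ℓ = 6 then .assrt (c₂ = 0) (.var (2 * k + v % 2) [c₁, c₂])
      else .assrt (c₂ > 0) (.var (2 * l + v % 2) [c₁, c₂ - 1]))
  | _ => .ichoice {v % 2} (fun _ => .var v es)

/-- T₁[i,j]: the type encoding the machine started at configuration (1,i,j). -/
def T₁ (i j : ℕ) : RTy := .var 2 [i, j]

/-- T₁'[i,j]: its primed variant. -/
def T₁' (i j : ℕ) : RTy := .var 3 [i, j]

/-- The computation of M from (1, i, j) is finite. -/
def Halts (M : List Instr) (i j : ℕ) : Prop :=
  ∃ C : Config, Relation.ReflTransGen (Succ M) (1, i, j) C ∧ ∀ C', ¬ Succ M C C'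
/-! Every instruction other than `halt` is translated identically on both sides, so from a pair
(T_p[c₁,c₂], T_p'[c₁,c₂]) the bisimulation game leads either to the pair of the successor
configuration or, through a zero test, to a pair ?{φ}T_q[…], ?{φ}T_q'[…] with the same φ, whose
continuations only need to be related when φ holds, i.e. on the branch the machine takes. So the
pairs of configurations reachable from (1,i,j), closed under such assertions, form a bisimulation
as long as no halting configuration is reachable: only there do T_inf and T_inf' differ. -/

inductive AssrtClosure (R : RTy → RTy → Prop) : RTy → RTy → Prop
  | base {A B : RTy} : R A B → AssrtClosure R A B
  | assrt {φ : Prop} {A B : RTy} : (φ → R A B) → AssrtClosure R (.assrt φ A) (.assrt φ B)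

theorem isBisim_assrtClosure {Sg : Sig} {R : RTy → RTy → Prop}
    (h : ∀ A B, R A B → RStep (AssrtClosure R) (unfoldT Sg A) (unfoldT Sg B)) :
    IsBisim Sg (AssrtClosure R) := by
  rintro _ _ (⟨hR⟩ | @⟨φ, A, B, hR⟩)
  · exact h _ _ hR
  · by_cases hφ : φ
    · exact .inl ⟨hφ, hφ, .base (hR hφ)⟩
    · exact .inr ⟨hφ, hφ⟩

inductive EncodingPair (S : Config → Prop) : RTy → RTy → Prop
  | mk {p c₁ c₂ : ℕ} :
      S (p, c₁, c₂) → EncodingPair S (.var (2 * p) [c₁, c₂]) (.var (2 * p + 1) [c₁, c₂])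

theorem rStep_sgM {M : List Instr} {S : Config → Prop} {p c₁ c₂ : ℕ}
    (hlive : ∃ C, Succ M (p, c₁, c₂) C) (hS : ∀ C, Succ M (p, c₁, c₂) C → S C) :
    RStep (AssrtClosure (EncodingPair S)) (SgM M (2 * p) [c₁, c₂])
      (SgM M (2 * p + 1) [c₁, c₂]) := by
  obtain ⟨C, hC⟩ := hlive
  have h₀ : 2 * p / 2 - 1 = p - 1 ∧ 2 * p % 2 = 0 := by omega
  have h₁ : (2 * p + 1) / 2 - 1 = p - 1 ∧ (2 * p + 1) % 2 = 1 := by omega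
  unfold Succ at hC hS
  rcases hM : M[p - 1]? with _ | (k | k | ⟨k, l⟩ | ⟨k, l⟩ | _) <;>
    simp only [hM] at hC hS <;>
    simp only [SgM, RStep, h₀, h₁, hM, List.getD_cons_zero, List.getD_cons_succ, add_zero]
  case inc1 | inc2 => exact ⟨trivial, fun _ _ => .base (.mk (hS _ rfl))⟩
  case zdec1 | zdec2 =>
    refine ⟨trivial, ?_⟩
    simp only [Finset.mem_insert, Finset.mem_singleton]
    rintro _ (rfl | rfl) <;> simp only [↓reduceIte, Nat.reduceEqDiff]
    · exact .assrt fun hzero => .mk (hS _ (by simp [hzero]))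
    · exact .assrt fun hpos => .mk (hS _ (by simp [hpos.ne']))

theorem isBisim_sgM_of_invariant {M : List Instr} {S : Config → Prop}
    (hclosed : ∀ C C', S C → Succ M C C' → S C') (hlive : ∀ C, S C → ∃ C', Succ M C C') :
    IsBisim (SgM M) (AssrtClosure (EncodingPair S)) := by
  refine isBisim_assrtClosure ?_
  rintro _ _ ⟨hS⟩
  exact rStep_sgM (hlive _ hS) fun _ => hclosed _ _ hS

/-- if machine M starting from (1, i, j) does not halt, then
T₁[i,j] ≡ T₁'[i,j], i.e. some type bisimulation (built from the pairs
(T_p[c₁,c₂], T_p'[c₁,c₂]) for reachable configurations together with the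
required continuation pairs through the assertion constructors) relates them. -/
theorem nonhalting_implies_type_equal (M : List Instr) (i j : ℕ)
    (h : ¬ Halts M i j) : REq (SgM M) (T₁ i j) (T₁' i j) := by
  let Reach := Relation.ReflTransGen (Succ M) (1, i, j)
  have hlive : ∀ C, Reach C → ∃ C', Succ M C C' :=
    fun C hC => not_forall_not.mp fun hfinal => h ⟨C, hC, hfinal⟩
  exact ⟨AssrtClosure (EncodingPair Reach),
    isBisim_sgM_of_invariant (fun _ _ hC hstep => hC.tail hstep) hlive,
    .base (.mk Relation.ReflTransGen.refl)⟩
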